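/- Let A be a nonnegative selfadjoint operator on a complex Hilbert space X with trivial kernel, α > 0, and x ∈ X with ∫₀^∞ t^{2α-1}‖e^{-tA}x‖²_X dt < ∞. Then the vectors y_n = Γ(α)^{-1} ∫₀^n t^{α-1} e^{-tA} x dt form a Cauchy sequence in X, their limit y_∞ belongs to D(A^α), and A^α y_∞ = x. -/

import Mathlib

/-!
By the spectral theorem, every nonnegative selfadjoint operator `A` on a complex
Hilbert space `X` (with trivial kernel) is unitarily equivalent to multiplication by a
measurable function `a ≥ 0` (with `a > 0` a.e.) on some `L²(μ)`.  We formalize the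
statement in this spectral model: `X = L²(μ)`, `(e^{-tA}x)(i) = exp(-t·a i)·x i`,
`(A^α y)(i) = (a i)^α·y i`, and `x ∈ R(A^α)` iff `x = A^α y` for some `y ∈ L²(μ)`.
-/

open MeasureTheory Filter
open scoped ENNReal NNReal Topology

/-- `‖e^{-tA} x‖²` in the spectral model. -/
noncomputable def heatNormSq {ι : Type*} [MeasurableSpace ι] (μ : Measure ι)
    (a : ι → ℝ) (x : ι → ℂ) (t : ℝ) : ℝ≥0∞ :=
  ∫⁻ i, (‖x i‖₊ : ℝ≥0∞) ^ 2 * ENNReal.ofReal (Real.exp (-(2 * t * a i))) ∂μ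

/-- `∫₀^∞ t^{2α-1} ‖e^{-tA} x‖² dt` in the spectral model; this is the square of the
norm `|||x|||_{R(A^α)}`. -/
noncomputable def rangeIntegral {ι : Type*} [MeasurableSpace ι] (μ : Measure ι)
    (a : ι → ℝ) (α : ℝ) (x : ι → ℂ) : ℝ≥0∞ :=
  ∫⁻ t in Set.Ioi (0 : ℝ), ENNReal.ofReal (t ^ (2 * α - 1)) * heatNormSq μ a x t

/-- The partial Balakrishnan approximation `y_n = Γ(α)⁻¹ ∫₀^n t^{α-1} e^{-tA} x dt`
in the spectral model. -/
noncomputable def balakrishnan {ι : Type*} (a : ι → ℝ) (α : ℝ) (x : ι → ℂ)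
    (n : ℕ) : ι → ℂ := fun i =>
  (((Real.Gamma α)⁻¹ * ∫ t in Set.Ioc (0 : ℝ) (n : ℝ),
      t ^ (α - 1) * Real.exp (-(t * a i)) : ℝ) : ℂ) * x i

/-!
In the spectral model everything is pointwise in `i`. The coefficient
`Γ(α)⁻¹ ∫₀ⁿ t^{α-1} e^{-t a i} dt` increases to `a i ^ (-α)`, so `y_n` converges pointwise to
`y = A^{-α} x` with `‖y_n‖ ≤ ‖y‖`. Tonelli and the Gamma integral give
`∫₀^∞ t^{2α-1} ‖e^{-tA} x‖² dt = Γ(2α) 4^{-α} ‖A^{-α} x‖²`, so `y ∈ L²`, and dominated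
convergence yields `y_n → y` in `L²`.
-/

open Real Set

section GammaIntegral

variable {s b : ℝ}

lemma integrableOn_rpow_mul_exp_neg_mul_Ioi' (hs : 0 < s) (hb : 0 < b) :
    IntegrableOn (fun t : ℝ => t ^ (s - 1) * exp (-(t * b))) (Ioi 0) := by
  simpa [mul_comm _ b] using
    integrableOn_rpow_mul_exp_neg_mul_rpow (p := 1) (s := s - 1) (by linarith) one_pos hb

lemma integral_rpow_mul_exp_neg_mul_Ioi' (hs : 0 < s) (hb : 0 < b) :
    ∫ t in Ioi 0, t ^ (s - 1) * exp (-(t * b)) = b ^ (-s) * Gamma s := by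
  simp_rw [mul_comm _ b]
  rw [integral_rpow_mul_exp_neg_mul_Ioi hs hb, one_div, inv_rpow hb.le, rpow_neg hb.le]

lemma lintegral_rpow_mul_exp_neg_mul_Ioi (hs : 0 < s) (hb : 0 < b) :
    ∫⁻ t in Ioi 0, ENNReal.ofReal (t ^ (s - 1)) * ENNReal.ofReal (exp (-(t * b))) =
      ENNReal.ofReal (Gamma s) * ENNReal.ofReal (b ^ (-s)) := by
  have hnonneg : 0 ≤ᵐ[volume.restrict (Ioi 0)] fun t : ℝ => t ^ (s - 1) * exp (-(t * b)) :=
    ae_restrict_of_forall_mem measurableSet_Ioi fun t ht =>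
      mul_nonneg (rpow_nonneg (le_of_lt ht) _) (exp_nonneg _)
  rw [← ENNReal.ofReal_mul (Gamma_pos_of_pos hs).le, mul_comm (Gamma s),
    ← integral_rpow_mul_exp_neg_mul_Ioi' hs hb,
    ofReal_integral_eq_lintegral_ofReal (integrableOn_rpow_mul_exp_neg_mul_Ioi' hs hb) hnonneg]
  exact setLIntegral_congr_fun measurableSet_Ioi fun _ ht =>
    (ENNReal.ofReal_mul (rpow_nonneg (le_of_lt ht) _)).symm

lemma integral_Ioc_rpow_mul_exp_neg_mul_nonneg (T : ℝ) :
    0 ≤ ∫ t in Ioc 0 T, t ^ (s - 1) * exp (-(t * b)) :=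
  setIntegral_nonneg measurableSet_Ioc fun _ ht =>
    mul_nonneg (rpow_nonneg ht.1.le _) (exp_nonneg _)

lemma integral_Ioc_rpow_mul_exp_neg_mul_le (hs : 0 < s) (hb : 0 < b) (T : ℝ) :
    ∫ t in Ioc 0 T, t ^ (s - 1) * exp (-(t * b)) ≤ b ^ (-s) * Gamma s := by
  rw [← integral_rpow_mul_exp_neg_mul_Ioi' hs hb]
  refine setIntegral_mono_set (integrableOn_rpow_mul_exp_neg_mul_Ioi' hs hb) ?_
    Ioc_subset_Ioi_self.eventuallyLE
  exact ae_restrict_of_forall_mem measurableSet_Ioi fun t ht =>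
    mul_nonneg (rpow_nonneg (le_of_lt ht) _) (exp_nonneg _)

lemma tendsto_integral_Ioc_rpow_mul_exp_neg_mul (hs : 0 < s) (hb : 0 < b) :
    Tendsto (fun n : ℕ => ∫ t in Ioc 0 (n : ℝ), t ^ (s - 1) * exp (-(t * b))) atTop
      (𝓝 (b ^ (-s) * Gamma s)) := by
  rw [← integral_rpow_mul_exp_neg_mul_Ioi' hs hb]
  refine (intervalIntegral_tendsto_integral_Ioi 0 (integrableOn_rpow_mul_exp_neg_mul_Ioi' hs hb)
    tendsto_natCast_atTop_atTop).congr fun n => ?_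
  exact intervalIntegral.integral_of_le n.cast_nonneg

lemma two_mul_rpow_neg_two_mul (hb : 0 ≤ b) (s : ℝ) :
    (2 * b) ^ (-(2 * s)) = 4 ^ (-s) * (b ^ (-s)) ^ 2 := by
  rw [mul_rpow zero_le_two hb, ← rpow_mul_natCast hb, show (4 : ℝ) = 2 ^ (2 : ℝ) by norm_num,
    ← rpow_mul zero_le_two]
  ring_nf

end GammaIntegral

section LpConvergence

variable {α E : Type*} [MeasurableSpace α] {μ : Measure α} [NormedAddCommGroup E]

lemma eLpNorm_two_sq_eq_lintegral (f : α → E) : eLpNorm f 2 μ ^ 2 = ∫⁻ x, ‖f x‖ₑ ^ 2 ∂μ := by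
  rw [eLpNorm_eq_lintegral_rpow_enorm_toReal two_ne_zero ENNReal.ofNat_ne_top,
    ← ENNReal.rpow_natCast, ← ENNReal.rpow_mul]
  norm_num

variable {p : ℝ≥0∞} {f : ℕ → α → E} {g : α → E}

lemma tendsto_eLpNorm_sub_of_tendsto_ae_of_norm_le (hp0 : p ≠ 0) (hp : p ≠ ∞)
    (hf : ∀ n, AEStronglyMeasurable (f n) μ) (hg : MemLp g p μ)
    (hbound : ∀ n, ∀ᵐ x ∂μ, ‖f n x‖ ≤ ‖g x‖)
    (hlim : ∀ᵐ x ∂μ, Tendsto (fun n => f n x) atTop (𝓝 (g x))) :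
    Tendsto (fun n => eLpNorm (f n - g) p μ) atTop (𝓝 0) := by
  have hp_pos : 0 < p.toReal := ENNReal.toReal_pos hp0 hp
  have hbound_fin : ∫⁻ x, (2 * ‖g x‖ₑ) ^ p.toReal ∂μ ≠ ∞ := by
    simp_rw [ENNReal.mul_rpow_of_nonneg _ _ hp_pos.le]
    rw [lintegral_const_mul' _ _ (by simp)]
    exact ENNReal.mul_ne_top (by simp)
      (lintegral_rpow_enorm_lt_top_of_eLpNorm_lt_top hp0 hp hg.eLpNorm_lt_top).ne
  have hdom : ∀ n, ∀ᵐ x ∂μ, ‖f n x - g x‖ₑ ^ p.toReal ≤ (2 * ‖g x‖ₑ) ^ p.toReal := fun n =>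
    (hbound n).mono fun x hx => by
      gcongr
      calc ‖f n x - g x‖ₑ ≤ ‖f n x‖ₑ + ‖g x‖ₑ := enorm_sub_le
        _ ≤ ‖g x‖ₑ + ‖g x‖ₑ := by gcongr; exact enorm_le_iff_norm_le.2 hx
        _ = 2 * ‖g x‖ₑ := (two_mul _).symm
  have hpointwise : ∀ᵐ x ∂μ, Tendsto (fun n => ‖f n x - g x‖ₑ ^ p.toReal) atTop (𝓝 0) :=
    hlim.mono fun x hx => by
      have h : Tendsto (fun n => ‖f n x - g x‖ₑ) atTop (𝓝 0) := by
        simpa [Function.comp_def] using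
          (continuous_enorm.tendsto 0).comp (tendsto_sub_nhds_zero_iff.2 hx)
      simpa [Function.comp_def, ENNReal.zero_rpow_of_pos hp_pos] using
        ((ENNReal.continuous_rpow_const (y := p.toReal)).tendsto 0).comp h
  have hint := tendsto_lintegral_of_dominated_convergence' _
    (fun n => (((hf n).sub hg.1).enorm).pow_const _) hdom hbound_fin hpointwise
  rw [lintegral_zero] at hint
  have h := (ENNReal.continuous_rpow_const (y := 1 / p.toReal)).tendsto 0 |>.comp hint
  rw [ENNReal.zero_rpow_of_pos (by positivity)] at h
  simpa only [eLpNorm_eq_lintegral_rpow_enorm_toReal hp0 hp, Function.comp_def] using h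

lemma eLpNorm_sub_lt_of_tendsto_eLpNorm_sub (hp : 1 ≤ p)
    (hf : ∀ n, AEStronglyMeasurable (f n) μ) (hg : AEStronglyMeasurable g μ)
    (hlim : Tendsto (fun n => eLpNorm (f n - g) p μ) atTop (𝓝 0)) :
    ∀ ε > (0 : ℝ), ∃ N : ℕ, ∀ m ≥ N, ∀ n ≥ N,
      eLpNorm (fun x => f m x - f n x) p μ < ENNReal.ofReal ε := by
  intro ε hε
  obtain ⟨N, hN⟩ := eventually_atTop.1 <|
    hlim.eventually_lt_const (ENNReal.ofReal_pos.2 (half_pos hε))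
  refine ⟨N, fun m hm n hn => ?_⟩
  have hsplit : (fun x => f m x - f n x) = (f m - g) - (f n - g) := by
    ext x; simp
  calc eLpNorm (fun x => f m x - f n x) p μ
      ≤ eLpNorm (f m - g) p μ + eLpNorm (f n - g) p μ := by
        rw [hsplit]; exact eLpNorm_sub_le ((hf m).sub hg) ((hf n).sub hg) hp
    _ < ENNReal.ofReal (ε / 2) + ENNReal.ofReal (ε / 2) := ENNReal.add_lt_add (hN m hm) (hN n hn)
    _ = ENNReal.ofReal ε := by rw [← ENNReal.ofReal_add (by positivity) (by positivity), add_halves]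

end LpConvergence

lemma lintegral_rpow_mul_lintegral_exp_neg_mul_Ioi {ι : Type*} [MeasurableSpace ι]
    {ν : Measure ι} [SFinite ν] {b : ι → ℝ} (hb : Measurable b) (hpos : ∀ᵐ i ∂ν, 0 < b i)
    {s : ℝ} (hs : 0 < s) :
    ∫⁻ t in Ioi 0, ENNReal.ofReal (t ^ (s - 1)) * (∫⁻ i, ENNReal.ofReal (exp (-(t * b i))) ∂ν) =
      ENNReal.ofReal (Gamma s) * ∫⁻ i, ENNReal.ofReal (b i ^ (-s)) ∂ν := calc
  _ = ∫⁻ t in Ioi 0,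
        (∫⁻ i, ENNReal.ofReal (t ^ (s - 1)) * ENNReal.ofReal (exp (-(t * b i))) ∂ν) := by
      simp_rw [lintegral_const_mul' _ _ ENNReal.ofReal_ne_top]
  _ = ∫⁻ i,
        (∫⁻ t in Ioi 0, ENNReal.ofReal (t ^ (s - 1)) * ENNReal.ofReal (exp (-(t * b i)))) ∂ν :=
      lintegral_lintegral_swap (Measurable.aemeasurable (by fun_prop))
  _ = ∫⁻ i, ENNReal.ofReal (Gamma s) * ENNReal.ofReal (b i ^ (-s)) ∂ν :=
      lintegral_congr_ae (hpos.mono fun _ hi => lintegral_rpow_mul_exp_neg_mul_Ioi hs hi)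
  _ = _ := lintegral_const_mul' _ _ ENNReal.ofReal_ne_top

section SpectralModel

variable {ι : Type*} {a : ι → ℝ} {α : ℝ} {x : ι → ℂ}

noncomputable def spectralRpow (a : ι → ℝ) (β : ℝ) (x : ι → ℂ) : ι → ℂ :=
  fun i => ((a i ^ β : ℝ) : ℂ) * x i

lemma spectralRpow_spectralRpow_neg {i : ι} (hai : 0 < a i) (β : ℝ) :
    spectralRpow a β (spectralRpow a (-β) x) i = x i := by
  simp only [spectralRpow, ← mul_assoc, ← Complex.ofReal_mul, ← rpow_add hai, add_neg_cancel,
    rpow_zero, Complex.ofReal_one, one_mul]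

lemma tendsto_balakrishnan_apply (hα : 0 < α) {i : ι} (hai : 0 < a i) :
    Tendsto (fun n => balakrishnan a α x n i) atTop (𝓝 (spectralRpow a (-α) x i)) := by
  have h := (tendsto_integral_Ioc_rpow_mul_exp_neg_mul hα hai).const_mul (Gamma α)⁻¹
  rw [mul_comm, mul_assoc, mul_inv_cancel₀ (Gamma_pos_of_pos hα).ne', mul_one] at h
  exact ((Complex.continuous_ofReal.tendsto _).comp h).mul_const (x i)

lemma norm_balakrishnan_apply_le (hα : 0 < α) {i : ι} (hai : 0 < a i) (n : ℕ) :
    ‖balakrishnan a α x n i‖ ≤ ‖spectralRpow a (-α) x i‖ := by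
  have hΓ := Gamma_pos_of_pos hα
  have hI := integral_Ioc_rpow_mul_exp_neg_mul_le hα hai n
  simp only [balakrishnan, spectralRpow, norm_mul, Complex.norm_real, norm_eq_abs, abs_inv,
    abs_of_pos hΓ, abs_of_nonneg (integral_Ioc_rpow_mul_exp_neg_mul_nonneg _),
    abs_of_nonneg (rpow_nonneg hai.le _)]
  gcongr
  rwa [inv_mul_le_iff₀ hΓ, mul_comm]

variable [MeasurableSpace ι] {μ : Measure ι}

lemma aestronglyMeasurable_spectralRpow (ha : Measurable a) (β : ℝ)
    (hx : AEStronglyMeasurable x μ) : AEStronglyMeasurable (spectralRpow a β x) μ :=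
  (Complex.measurable_ofReal.comp (ha.pow_const β)).aestronglyMeasurable.mul hx

lemma aestronglyMeasurable_balakrishnan (ha : Measurable a) (hx : AEStronglyMeasurable x μ)
    (n : ℕ) : AEStronglyMeasurable (balakrishnan a α x n) μ := by
  have hI : StronglyMeasurable fun i => ∫ t in Ioc (0 : ℝ) n, t ^ (α - 1) * exp (-(t * a i)) :=
    (Measurable.stronglyMeasurable (by fun_prop) :
      StronglyMeasurable fun p : ι × ℝ => p.2 ^ (α - 1) * exp (-(p.2 * a p.1))).integral_prod_right'
  exact (Complex.measurable_ofReal.comp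
    (measurable_const.mul hI.measurable)).aestronglyMeasurable.mul hx

end SpectralModel

section RangeIntegral

variable {ι : Type*} [MeasurableSpace ι] {μ : Measure ι} {a : ι → ℝ} {α : ℝ} {x : ι → ℂ}

lemma heatNormSq_eq_lintegral_withDensity (ha : Measurable a) (hx : AEMeasurable x μ) (t : ℝ) :
    heatNormSq μ a x t =
      ∫⁻ i, ENNReal.ofReal (exp (-(t * (2 * a i)))) ∂μ.withDensity fun i => ‖x i‖ₑ ^ 2 := by
  rw [lintegral_withDensity_eq_lintegral_mul₀ (hx.enorm.pow_const 2)
    (Measurable.aemeasurable (by fun_prop))]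
  simp only [heatNormSq, Pi.mul_apply, enorm_eq_nnnorm, mul_assoc, mul_left_comm t]

lemma rangeIntegral_eq_mul_eLpNorm_sq (ha : Measurable a) (hpos : ∀ᵐ i ∂μ, 0 < a i)
    (hα : 0 < α) (hx : MemLp x 2 μ) :
    rangeIntegral μ a α x =
      ENNReal.ofReal (Gamma (2 * α) * 4 ^ (-α)) * eLpNorm (spectralRpow a (-α) x) 2 μ ^ 2 := by
  -- `μ` need not be σ-finite, so Tonelli is applied to the finite measure `‖x‖² μ` instead.
  set ν := μ.withDensity fun i => ‖x i‖ₑ ^ 2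
  have hdens : AEMeasurable (fun i => ‖x i‖ₑ ^ 2) μ := hx.aemeasurable.enorm.pow_const 2
  have : IsFiniteMeasure ν := isFiniteMeasure_withDensity <| by
    rw [← eLpNorm_two_sq_eq_lintegral]; exact ENNReal.pow_ne_top hx.eLpNorm_ne_top
  have hposν : ∀ᵐ i ∂ν, 0 < 2 * a i :=
    withDensity_absolutelyContinuous μ _ (hpos.mono fun i hi => by positivity)
  simp_rw [rangeIntegral, heatNormSq_eq_lintegral_withDensity ha hx.aemeasurable]
  rw [lintegral_rpow_mul_lintegral_exp_neg_mul_Ioi (by fun_prop) hposν (by positivity),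
    ENNReal.ofReal_mul (Gamma_pos_of_pos (by positivity)).le, mul_assoc]
  congr 1
  rw [eLpNorm_two_sq_eq_lintegral, lintegral_withDensity_eq_lintegral_mul₀ hdens
      (Measurable.aemeasurable (by fun_prop)), ← lintegral_const_mul' _ _ ENNReal.ofReal_ne_top]
  refine lintegral_congr_ae (hpos.mono fun i hi => ?_)
  rw [Pi.mul_apply, two_mul_rpow_neg_two_mul hi.le, ENNReal.ofReal_mul (by positivity),
    ENNReal.ofReal_pow (by positivity)]
  simp only [spectralRpow, enorm_mul]
  rw [← ofReal_norm ((a i ^ (-α) : ℝ) : ℂ), Complex.norm_real,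
    norm_of_nonneg (by positivity)]
  ring

lemma memLp_spectralRpow_neg_of_rangeIntegral_lt_top (ha : Measurable a)
    (hpos : ∀ᵐ i ∂μ, 0 < a i) (hα : 0 < α) (hx : MemLp x 2 μ) (hfin : rangeIntegral μ a α x < ⊤) :
    MemLp (spectralRpow a (-α) x) 2 μ := by
  refine ⟨aestronglyMeasurable_spectralRpow ha _ hx.1, ?_⟩
  rw [rangeIntegral_eq_mul_eLpNorm_sq ha hpos hα hx] at hfin
  have hconst : ENNReal.ofReal (Gamma (2 * α) * 4 ^ (-α)) ≠ 0 :=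
    (ENNReal.ofReal_pos.2 (by positivity)).ne'
  simpa using ENNReal.lt_top_of_mul_ne_top_right hfin.ne hconst

end RangeIntegral

/-- If `∫₀^∞ t^{2α-1}‖e^{-tA}x‖² dt < ∞`, then the vectors
`y_n = Γ(α)⁻¹ ∫₀^n t^{α-1} e^{-tA} x dt` form a Cauchy sequence in `X`, their limit
`y_∞` belongs to `D(A^α)`, and `A^α y_∞ = x`. -/
theorem stmt12 {ι : Type*} [MeasurableSpace ι] (μ : Measure ι)
    (a : ι → ℝ) (hameas : Measurable a) (ha0 : ∀ i, 0 ≤ a i)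
    (hker : ∀ᵐ i ∂μ, a i ≠ 0)
    (α : ℝ) (hα : 0 < α) (x : ι → ℂ) (hx : MemLp x 2 μ)
    (hfin : rangeIntegral μ a α x < ⊤) :
    (∀ ε > (0 : ℝ), ∃ N : ℕ, ∀ m ≥ N, ∀ n ≥ N,
      eLpNorm (fun i => balakrishnan a α x m i - balakrishnan a α x n i) 2 μ
        < ENNReal.ofReal ε) ∧
    ∃ ylim : ι → ℂ, MemLp ylim 2 μ ∧
      Tendsto (fun n : ℕ =>
          eLpNorm (fun i => balakrishnan a α x n i - ylim i) 2 μ) atTop (𝓝 0) ∧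
      MemLp (fun i => ((a i ^ α : ℝ) : ℂ) * ylim i) 2 μ ∧
      x =ᵐ[μ] fun i => ((a i ^ α : ℝ) : ℂ) * ylim i := by
  have hpos : ∀ᵐ i ∂μ, 0 < a i := hker.mono fun i hi => (ha0 i).lt_of_ne' hi
  have hy := memLp_spectralRpow_neg_of_rangeIntegral_lt_top hameas hpos hα hx hfin
  have hbal := aestronglyMeasurable_balakrishnan (α := α) hameas hx.1
  have hlim : Tendsto (fun n => eLpNorm (balakrishnan a α x n - spectralRpow a (-α) x) 2 μ)
      atTop (𝓝 0) :=
    tendsto_eLpNorm_sub_of_tendsto_ae_of_norm_le two_ne_zero ENNReal.ofNat_ne_top hbal hy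
      (fun n => hpos.mono fun _ hi => norm_balakrishnan_apply_le hα hi n)
      (hpos.mono fun _ hi => tendsto_balakrishnan_apply hα hi)
  have hAy : x =ᵐ[μ] spectralRpow a α (spectralRpow a (-α) x) :=
    hpos.mono fun _ hi => (spectralRpow_spectralRpow_neg hi α).symm
  exact ⟨eLpNorm_sub_lt_of_tendsto_eLpNorm_sub one_le_two hbal hy.1 hlim,
    _, hy, hlim, hx.ae_eq hAy, hAy⟩
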